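/- The triple (kF_X^a, ⋄_a, B⁺) is a (non-commutative) unitary Rota-Baxter algebra of weight λ with unit the single-vertex tree •: the operation ⋄_a is a well-defined associative k-bilinear multiplication on kF_X^a with two-sided unit •, and the grafting operator B⁺ satisfies B⁺(F) ⋄_a B⁺(F') = B⁺(F ⋄_a B⁺(F')) + B⁺(B⁺(F) ⋄_a F') + λ B⁺(F ⋄_a F') for all F, F' ∈ kF_X^a. -/

import Mathlib

set_option linter.unreachableTactic false
set_option linter.unnecessarySeqFocus false
set_option linter.unusedTactic false

/-! Angularly decorated planar rooted trees and forests over a decoration set `X`.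
A tree is either the single-vertex tree `•` (leaf) or the grafting `B⁺(F)` of a forest;
a forest is an alternating word `T₁ x₁ T₂ x₂ ⋯ x_{ℓ-1} T_ℓ` of trees and decorations. -/
mutual
  inductive ATree (X : Type) : Type
    | leaf : ATree X
    | graft : AForest X → ATree X
  inductive AForest (X : Type) : Type
    | single : ATree X → AForest X
    | cons : ATree X → X → AForest X → AForest X
end

mutual
  /-- Depth of an angularly decorated tree. -/
  def ATree.depth {X : Type} : ATree X → ℕ
    | .leaf => 0
    | .graft F => AForest.depth F + 1
  /-- Depth of an angularly decorated forest. -/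
  def AForest.depth {X : Type} : AForest X → ℕ
    | .single T => ATree.depth T
    | .cons T _ F => max (ATree.depth T) (AForest.depth F)
end

mutual
  /-- An auxiliary size of an angularly decorated tree. -/
  def ATree.size {X : Type} : ATree X → ℕ
    | .leaf => 1
    | .graft F => AForest.size F + 1
  /-- An auxiliary size of an angularly decorated forest. -/
  def AForest.size {X : Type} : AForest X → ℕ
    | .single T => ATree.size T + 1
    | .cons T _ F => ATree.size T + AForest.size F + 1
end

mutual
  /-- The number of vertices of an angularly decorated tree. -/
  def ATree.deg {X : Type} : ATree X → ℕ
    | .leaf => 1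
    | .graft F => AForest.deg F + 1
  /-- The number of vertices of an angularly decorated forest. -/
  def AForest.deg {X : Type} : AForest X → ℕ
    | .single T => ATree.deg T
    | .cons T _ F => ATree.deg T + AForest.deg F
end

/-- Auxiliary lemma for termination proofs. -/
theorem natlex_of_le_of_lt {a₁ a₂ b₁ b₂ : ℕ} (h1 : a₁ ≤ a₂) (h2 : b₁ < b₂) :
    Prod.Lex (fun x y : ℕ => x < y) (fun x y : ℕ => x < y) (a₁, b₁) (a₂, b₂) := by
  rcases lt_or_eq_of_le h1 with h | rfl
  · exact Prod.Lex.left _ _ h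
  · exact Prod.Lex.right _ h2

/-- `RBF k X` is the free `k`-module on the set of angularly decorated rooted forests. -/
abbrev RBF (k X : Type) [CommRing k] := AForest X →₀ k

mutual
  /-- The product `⋄ₐ` on basis trees (with values in the free module on trees). -/
  noncomputable def mulT {k X : Type} [CommRing k] (lam : k) :
      ATree X → ATree X → (ATree X →₀ k)
    | .leaf, T' => Finsupp.single T' 1
    | T, .leaf => Finsupp.single T 1
    | .graft F, .graft F' =>
        Finsupp.mapDomain ATree.graft (mulF lam (.single (.graft F)) F')
          + Finsupp.mapDomain ATree.graft (mulF lam F (.single (.graft F')))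
          + lam • Finsupp.mapDomain ATree.graft (mulF lam F F')
  termination_by T T' => (ATree.depth T + ATree.depth T', ATree.size T + ATree.size T')
  decreasing_by
    all_goals
      first
        | (apply Prod.Lex.left
           simp [ATree.depth, AForest.depth] <;> omega)
        | (apply natlex_of_le_of_lt <;>
            simp [ATree.depth, AForest.depth, ATree.size, AForest.size] <;>
            omega)
  /-- The product `⋄ₐ` on basis forests. -/
  noncomputable def mulF {k X : Type} [CommRing k] (lam : k) :
      AForest X → AForest X → RBF k X
    | .single T, .single T' => Finsupp.mapDomain AForest.single (mulT lam T T')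
    | .single T, .cons T' y G' =>
        Finsupp.mapDomain (fun t => AForest.cons t y G') (mulT lam T T')
    | .cons T x G, F' => Finsupp.mapDomain (fun g => AForest.cons T x g) (mulF lam G F')
  termination_by F F' => (AForest.depth F + AForest.depth F', AForest.size F + AForest.size F')
  decreasing_by
    all_goals
      first
        | (apply Prod.Lex.left
           simp [ATree.depth, AForest.depth] <;> omega)
        | (apply natlex_of_le_of_lt <;>
            simp [ATree.depth, AForest.depth, ATree.size, AForest.size] <;>
            omega)
end

open scoped TensorProduct

variable {k X : Type} [CommRing k]

/-- The unit `•` of the Rota-Baxter algebra `kF_X^a`: the single-vertex tree. -/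
noncomputable def RBF.one : RBF k X := Finsupp.single (AForest.single ATree.leaf) 1

/-- The canonical basis inclusion of forests into `kF_X^a`. -/
noncomputable def RBF.of (F : AForest X) : RBF k X := Finsupp.single F 1

/-- The natural map `i_X : X → kF_X^a`, `x ↦ • x •`. -/
noncomputable def RBF.iX (x : X) : RBF k X :=
  RBF.of (AForest.cons ATree.leaf x (AForest.single ATree.leaf))

/-- The grafting operator `B⁺` as a `k`-linear operator on `kF_X^a`. -/
noncomputable def RBF.Bplus : RBF k X →ₗ[k] RBF k X :=
  Finsupp.lmapDomain k k (fun F => AForest.single (ATree.graft F))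

/-- The multiplication `⋄ₐ` on `kF_X^a` as a `k`-bilinear map. -/
noncomputable def RBF.mul (lam : k) : RBF k X →ₗ[k] RBF k X →ₗ[k] RBF k X :=
  Finsupp.lift _ k _ fun F => Finsupp.lift _ k _ fun F' => mulF lam F F'

/-- Concatenation of two forests with the angle between them decorated by `x`. -/
def concatA (x : X) : AForest X → AForest X → AForest X
  | .single T, F' => .cons T x F'
  | .cons T y G, F' => .cons T y (concatA x G F')

/-- Concatenation with middle angle decorated by `x`, as a bilinear map on `kF_X^a`. -/
noncomputable def RBF.concat (x : X) : RBF k X →ₗ[k] RBF k X →ₗ[k] RBF k X :=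
  Finsupp.lift _ k _ fun F => Finsupp.lift _ k _ fun F' => RBF.of (concatA x F F')

/-- Given two bilinear maps `f g` on a module `M`, the bilinear map on `M ⊗ M` sending
`(a ⊗ b, c ⊗ d)` to `f a c ⊗ g b d`. -/
noncomputable def mixMap {M : Type} [AddCommGroup M] [Module k M]
    (f g : M →ₗ[k] M →ₗ[k] M) :
    (M ⊗[k] M) →ₗ[k] (M ⊗[k] M) →ₗ[k] (M ⊗[k] M) :=
  TensorProduct.curry
    ((TensorProduct.map (TensorProduct.lift f) (TensorProduct.lift g)).comp
      (TensorProduct.tensorTensorTensorComm k M M M M).toLinearMap)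

mutual
  /-- The angular coproduct of a basis tree: the sum of `cl(H) ⊗ T/H` over all
  subforests `H ⊑ T` (sequences of mutually disjoint full subtrees and bare angular
  decorations in planar order). -/
  noncomputable def coT (lam : k) : ATree X → RBF k X ⊗[k] RBF k X
    | .leaf => RBF.one ⊗ₜ[k] RBF.one
    | .graft F => (RBF.of (AForest.single (ATree.graft F))) ⊗ₜ[k] RBF.one
        + (LinearMap.lTensor (RBF k X) RBF.Bplus) (coF lam F)
  /-- The angular coproduct of a basis forest: the sum of `cl(H) ⊗ F/H` over all
  subforests `H ⊑ F`. -/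
  noncomputable def coF (lam : k) : AForest X → RBF k X ⊗[k] RBF k X
    | .single T => coT lam T
    | .cons T x G =>
        mixMap (RBF.concat x) (RBF.mul lam) (coT lam T) (coF lam G)
          + mixMap (RBF.mul lam) (RBF.concat x) (coT lam T) (coF lam G)
end

/-- The angular coproduct `Δₐ : kF_X^a → kF_X^a ⊗ kF_X^a`,
`Δₐ(F) = Σ_{H ⊑ F} cl(H) ⊗ F/H`. -/
noncomputable def RBF.Delta (lam : k) : RBF k X →ₗ[k] RBF k X ⊗[k] RBF k X :=
  Finsupp.lift _ k _ fun F => coF lam F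

/-- The counit `εₐ : kF_X^a → k` sending the single-vertex tree `•` to `1` and every
other forest to `0`. -/
noncomputable def RBF.eps : RBF k X →ₗ[k] k :=
  Finsupp.lift _ k _ fun F =>
    match F with
    | .single .leaf => (1 : k)
    | _ => 0

/-- The unit map `u : k → kF_X^a`, `c ↦ c •`. -/
noncomputable def RBF.unit : k →ₗ[k] RBF k X :=
  LinearMap.toSpanSingleton k (RBF k X) RBF.one

/-!
On forests, `⋄ₐ` is concatenation in which the last tree of the left factor is merged with the
first tree of the right factor, so it is compatible with concatenation on either side; this
reduces associativity, by induction on the total number of vertices, to a product of three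
trees. A product of two grafted trees is by definition the Rota-Baxter expansion of `B⁺`, so the
Rota-Baxter identity holds on the nose, and for three grafted trees `B⁺(A), B⁺(B), B⁺(C)`
expanding both sides with it leaves only products of triples in which at least one root has
been removed, which associate by induction.
-/

theorem ATree.deg_pos (T : ATree X) : 0 < T.deg := by
  cases T <;> simp [ATree.deg]

theorem AForest.deg_pos (F : AForest X) : 0 < F.deg := by
  cases F <;> simp [AForest.deg, ATree.deg_pos]

theorem concatA_assoc (x z : X) :
    ∀ F G H : AForest X, concatA z (concatA x F G) H = concatA x F (concatA z G H)
  | .single _, _, _ => rfl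
  | .cons T w F, G, H => congrArg (AForest.cons T w) (concatA_assoc x z F G H)

namespace RBF

theorem single_eq_smul_of (F : AForest X) (c : k) :
    Finsupp.single F c = c • (of F : RBF k X) := by
  simp [of]

theorem of_single_leaf : of (.single .leaf) = (one : RBF k X) := rfl

theorem mul_of_of (lam : k) (F G : AForest X) : mul lam (of F) (of G) = mulF lam F G := by
  simp [mul, of]

theorem Bplus_of (F : AForest X) : Bplus (of F) = (of (.single (.graft F)) : RBF k X) := by
  simp [Bplus, of]

theorem concat_of_of (x : X) (F G : AForest X) :
    concat x (of F) (of G) = (of (concatA x F G) : RBF k X) := by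
  simp [concat, of]

theorem of_cons (T : ATree X) (x : X) (F : AForest X) :
    (of (.cons T x F) : RBF k X) = concat x (of (.single T)) (of F) :=
  (concat_of_of x (.single T) F).symm

theorem concat_of_single (x : X) (T : ATree X) (v : RBF k X) :
    concat x (of (.single T)) v = Finsupp.mapDomain (AForest.cons T x) v := by
  induction v using Finsupp.induction_linear with
  | zero => simp
  | add u v hu hv => rw [map_add, hu, hv, Finsupp.mapDomain_add]
  | single F c =>
    rw [single_eq_smul_of, map_smul, concat_of_of, Finsupp.mapDomain_smul, of, of,
      Finsupp.mapDomain_single]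
    rfl

theorem concat_mapDomain_single (y : X) (G : AForest X) (u : ATree X →₀ k) :
    concat y (Finsupp.mapDomain AForest.single u) (of G)
      = Finsupp.mapDomain (fun T => AForest.cons T y G) u := by
  induction u using Finsupp.induction_linear with
  | zero => simp
  | add u v hu hv =>
    rw [Finsupp.mapDomain_add, map_add, LinearMap.add_apply, hu, hv, Finsupp.mapDomain_add]
  | single T c =>
    rw [Finsupp.mapDomain_single, Finsupp.mapDomain_single, single_eq_smul_of, map_smul,
      LinearMap.smul_apply, concat_of_of, single_eq_smul_of]
    rfl

theorem concat_assoc (x z : X) (u v w : RBF k X) :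
    concat z (concat x u v) w = concat x u (concat z v w) := by
  induction u using Finsupp.induction_linear with
  | zero => simp
  | add _ _ h₁ h₂ => simp [h₁, h₂]
  | single F a =>
  induction v using Finsupp.induction_linear with
  | zero => simp
  | add _ _ h₁ h₂ => simp [h₁, h₂]
  | single G b =>
  induction w using Finsupp.induction_linear with
  | zero => simp
  | add _ _ h₁ h₂ => simp [h₁, h₂]
  | single H c => simp [single_eq_smul_of, concat_of_of, concatA_assoc]

end RBF

section BasisProduct

variable (lam : k)

theorem mulT_leaf_left (T : ATree X) : mulT lam .leaf T = Finsupp.single T 1 := by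
  rw [mulT]

theorem mulT_leaf_right (T : ATree X) : mulT lam T .leaf = Finsupp.single T 1 := by
  cases T <;> simp [mulT]

theorem mulT_graft_graft (F F' : AForest X) :
    mulT lam (.graft F) (.graft F') =
      Finsupp.mapDomain ATree.graft (mulF lam (.single (.graft F)) F')
        + Finsupp.mapDomain ATree.graft (mulF lam F (.single (.graft F')))
        + lam • Finsupp.mapDomain ATree.graft (mulF lam F F') := by
  rw [mulT]

theorem mulF_single_single (T T' : ATree X) :
    mulF lam (.single T) (.single T') = Finsupp.mapDomain AForest.single (mulT lam T T') := by
  rw [mulF]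

theorem mulF_single_cons (T T' : ATree X) (y : X) (G : AForest X) :
    mulF lam (.single T) (.cons T' y G)
      = RBF.concat y (mulF lam (.single T) (.single T')) (RBF.of G) := by
  rw [mulF_single_single, RBF.concat_mapDomain_single, mulF]

theorem mulF_cons_left (T : ATree X) (x : X) (G H : AForest X) :
    mulF lam (.cons T x G) H = RBF.concat x (RBF.of (.single T)) (mulF lam G H) := by
  rw [mulF, RBF.concat_of_single]

theorem mulF_concatA_left (y : X) :
    ∀ F G H : AForest X, mulF lam (concatA y F G) H = RBF.concat y (RBF.of F) (mulF lam G H)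
  | .single T, G, H => mulF_cons_left lam T y G H
  | .cons T x F, G, H => by
    rw [concatA, mulF_cons_left, mulF_concatA_left y F G H, ← RBF.concat_assoc, RBF.of_cons]

theorem mulF_concatA_right (y : X) :
    ∀ F G H : AForest X, mulF lam F (concatA y G H) = RBF.concat y (mulF lam F G) (RBF.of H)
  | .single T, .single T', H => mulF_single_cons lam T T' y H
  | .single T, .cons T' x G, H => by
    rw [concatA, mulF_single_cons, mulF_single_cons, ← RBF.concat_of_of, RBF.concat_assoc]
  | .cons T x F, G, H => by
    rw [mulF_cons_left, mulF_cons_left, mulF_concatA_right y F G H, RBF.concat_assoc]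

theorem mulF_leaf_left (F : AForest X) : mulF lam (.single .leaf) F = RBF.of F := by
  have leaf_mul_tree (T : ATree X) : mulF lam (.single .leaf) (.single T) = RBF.of (.single T) := by
    rw [mulF_single_single, mulT_leaf_left, Finsupp.mapDomain_single]; rfl
  cases F with
  | single T => exact leaf_mul_tree T
  | cons T y G => rw [mulF_single_cons, leaf_mul_tree, RBF.concat_of_of]; rfl

theorem mulF_leaf_right : ∀ F : AForest X, mulF lam F (.single .leaf) = RBF.of F
  | .single T => by rw [mulF_single_single, mulT_leaf_right, Finsupp.mapDomain_single]; rfl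
  | .cons T y G => by rw [mulF_cons_left, mulF_leaf_right G, RBF.concat_of_of]; rfl

end BasisProduct

def IsRotaBaxter {M : Type*} [AddCommGroup M] [Module k M] (m : M →ₗ[k] M →ₗ[k] M) (lam : k)
    (P : M →ₗ[k] M) : Prop :=
  ∀ u v, m (P u) (P v) = P (m u (P v)) + P (m (P u) v) + lam • P (m u v)

theorem IsRotaBaxter.assoc_of_assoc_lower {M : Type*} [AddCommGroup M] [Module k M]
    {m : M →ₗ[k] M →ₗ[k] M} {lam : k} {P : M →ₗ[k] M} (hP : IsRotaBaxter m lam P) {a b c : M}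
    (h₁ : m (m a (P b)) (P c) = m a (m (P b) (P c)))
    (h₂ : m (m (P a) b) (P c) = m (P a) (m b (P c)))
    (h₃ : m (m a b) (P c) = m a (m b (P c)))
    (h₄ : m (m (P a) (P b)) c = m (P a) (m (P b) c))
    (h₅ : m (m a (P b)) c = m a (m (P b) c))
    (h₆ : m (m (P a) b) c = m (P a) (m b c))
    (h₇ : m (m a b) c = m a (m b c)) :
    m (m (P a) (P b)) (P c) = m (P a) (m (P b) (P c)) := by
  have hab : m (P a) (P b) = P (m a (P b) + m (P a) b + lam • m a b) := by
    rw [hP, map_add, map_add, map_smul]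
  have hbc : m (P b) (P c) = P (m b (P c) + m (P b) c + lam • m b c) := by
    rw [hP, map_add, map_add, map_smul]
  rw [hab, hP _ c, ← hab, hbc, hP a (_ + _ + _), ← hbc]
  simp only [map_add, map_smul, LinearMap.add_apply, LinearMap.smul_apply, h₁, h₂, h₃, h₄, h₅,
    h₆, h₇]
  module

namespace RBF

variable (lam : k)

theorem mul_concat_left (y : X) (u v w : RBF k X) :
    mul lam (concat y u v) w = concat y u (mul lam v w) := by
  induction u using Finsupp.induction_linear with
  | zero => simp
  | add _ _ h₁ h₂ => simp [h₁, h₂]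
  | single F a =>
  induction v using Finsupp.induction_linear with
  | zero => simp
  | add _ _ h₁ h₂ => simp [h₁, h₂]
  | single G b =>
  induction w using Finsupp.induction_linear with
  | zero => simp
  | add _ _ h₁ h₂ => simp [h₁, h₂]
  | single H c => simp [single_eq_smul_of, concat_of_of, mul_of_of, mulF_concatA_left]

theorem mul_concat_right (y : X) (u v w : RBF k X) :
    mul lam u (concat y v w) = concat y (mul lam u v) w := by
  induction u using Finsupp.induction_linear with
  | zero => simp
  | add _ _ h₁ h₂ => simp [h₁, h₂]
  | single F a =>
  induction v using Finsupp.induction_linear with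
  | zero => simp
  | add _ _ h₁ h₂ => simp [h₁, h₂]
  | single G b =>
  induction w using Finsupp.induction_linear with
  | zero => simp
  | add _ _ h₁ h₂ => simp [h₁, h₂]
  | single H c => simp [single_eq_smul_of, concat_of_of, mul_of_of, mulF_concatA_right]

theorem one_mul (u : RBF k X) : mul lam one u = u := by
  induction u using Finsupp.induction_linear with
  | zero => simp
  | add _ _ h₁ h₂ => simp [h₁, h₂]
  | single F a => rw [single_eq_smul_of, map_smul, ← of_single_leaf, mul_of_of, mulF_leaf_left]

theorem mul_one (u : RBF k X) : mul lam u one = u := by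
  induction u using Finsupp.induction_linear with
  | zero => simp
  | add _ _ h₁ h₂ => simp [h₁, h₂]
  | single F a =>
    rw [single_eq_smul_of, map_smul, LinearMap.smul_apply, ← of_single_leaf, mul_of_of,
      mulF_leaf_right]

theorem Bplus_mul_Bplus_of (A B : AForest X) :
    mul lam (Bplus (of A)) (Bplus (of B))
      = Bplus (mul lam (of A) (Bplus (of B))) + Bplus (mul lam (Bplus (of A)) (of B))
        + lam • Bplus (mul lam (of A) (of B)) := by
  have graft_eq_Bplus (w : RBF k X) :
      Finsupp.mapDomain AForest.single (Finsupp.mapDomain ATree.graft w) = Bplus w := by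
    rw [Bplus, Finsupp.lmapDomain_apply, ← Finsupp.mapDomain_comp]
    rfl
  simp only [Bplus_of, mul_of_of, mulF_single_single, mulT_graft_graft, Finsupp.mapDomain_add,
    Finsupp.mapDomain_smul, graft_eq_Bplus]
  abel

theorem isRotaBaxter_Bplus : IsRotaBaxter (mul lam) lam (Bplus : RBF k X →ₗ[k] RBF k X) := by
  intro u v
  induction u using Finsupp.induction_linear with
  | zero => simp
  | add _ _ h₁ h₂ => simp only [map_add, LinearMap.add_apply, h₁, h₂, smul_add]; abel
  | single F a =>
  induction v using Finsupp.induction_linear with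
  | zero => simp
  | add _ _ h₁ h₂ => simp only [map_add, h₁, h₂, smul_add]; abel
  | single G b =>
    simp only [single_eq_smul_of, map_smul, LinearMap.smul_apply, Bplus_mul_Bplus_of, smul_add]
    module

theorem mul_assoc_of (F G H : AForest X) :
    mul lam (mul lam (of F) (of G)) (of H) = mul lam (of F) (mul lam (of G) (of H)) := by
  match F, G, H with
  | .cons T x F, G, H =>
    rw [of_cons, mul_concat_left, mul_concat_left, mul_concat_left, mul_assoc_of F G H]
  | .single T, .cons T' y G, H =>
    rw [of_cons, mul_concat_right, mul_concat_left, mul_concat_left, mul_concat_right]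
  | .single T, .single T', .cons T'' z H =>
    rw [of_cons, mul_concat_right, mul_concat_right, mul_concat_right,
      mul_assoc_of (.single T) (.single T') (.single T'')]
  | .single .leaf, .single _, .single _ => rw [of_single_leaf, one_mul, one_mul]
  | .single (.graft _), .single .leaf, .single _ => rw [of_single_leaf, mul_one, one_mul]
  | .single (.graft _), .single (.graft _), .single .leaf => rw [of_single_leaf, mul_one, mul_one]
  | .single (.graft A), .single (.graft B), .single (.graft C) =>
    have step := (isRotaBaxter_Bplus lam).assoc_of_assoc_lower (a := of A) (b := of B) (c := of C)
    simp only [Bplus_of] at step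
    exact step (mul_assoc_of A _ _) (mul_assoc_of _ B _) (mul_assoc_of A B _)
      (mul_assoc_of _ _ C) (mul_assoc_of A _ C) (mul_assoc_of _ B C) (mul_assoc_of A B C)
termination_by F.deg + G.deg + H.deg
decreasing_by all_goals grind [AForest.deg, ATree.deg, ATree.deg_pos, AForest.deg_pos]

theorem mul_assoc (u v w : RBF k X) : mul lam (mul lam u v) w = mul lam u (mul lam v w) := by
  induction u using Finsupp.induction_linear with
  | zero => simp
  | add _ _ h₁ h₂ => simp [h₁, h₂]
  | single F a =>
  induction v using Finsupp.induction_linear with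
  | zero => simp
  | add _ _ h₁ h₂ => simp [h₁, h₂]
  | single G b =>
  induction w using Finsupp.induction_linear with
  | zero => simp
  | add _ _ h₁ h₂ => simp [h₁, h₂]
  | single H c => simp [single_eq_smul_of, mul_assoc_of]

end RBF

/-- The triple `(kF_X^a, ⋄ₐ, B⁺)` is a (non-commutative) unitary
Rota-Baxter algebra of weight `λ` with unit the single-vertex tree `•`: `⋄ₐ` is an
associative `k`-bilinear multiplication on `kF_X^a` with two-sided unit `•`, and the
grafting operator `B⁺` satisfies the Rota-Baxter equation
`B⁺(F) ⋄ₐ B⁺(F') = B⁺(F ⋄ₐ B⁺(F')) + B⁺(B⁺(F) ⋄ₐ F') + λ B⁺(F ⋄ₐ F')`. -/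
theorem rbf_is_rota_baxter_algebra (k X : Type) [CommRing k] (lam : k) :
    (∀ a b c : RBF k X,
        RBF.mul lam (RBF.mul lam a b) c = RBF.mul lam a (RBF.mul lam b c))
    ∧ (∀ a : RBF k X, RBF.mul lam RBF.one a = a ∧ RBF.mul lam a RBF.one = a)
    ∧ (∀ a b : RBF k X,
        RBF.mul lam (RBF.Bplus a) (RBF.Bplus b)
          = RBF.Bplus (RBF.mul lam a (RBF.Bplus b))
            + RBF.Bplus (RBF.mul lam (RBF.Bplus a) b)
            + lam • RBF.Bplus (RBF.mul lam a b)) :=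
  ⟨RBF.mul_assoc lam, fun a => ⟨RBF.one_mul lam a, RBF.mul_one lam a⟩, RBF.isRotaBaxter_Bplus lam⟩
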